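/- For λ ≥ 0, the minimum value of the KLRR objective F(Z) = (1/2)‖Φ − ΦZ‖_F² + λ‖Z‖_*, attained at Z* = U D_λ Uᵀ, equals Σ_{i : σᵢ ≤ λ} σᵢ/2 + Σ_{i : σᵢ > λ} (λ − λ²/(2σᵢ)), where σ₁, …, σₙ are the eigenvalues of the Gram matrix K = ΦᵀΦ. -/

import Mathlib

open Matrix BigOperators Finset

/-- Frobenius norm of a real matrix. -/
noncomputable def frobNorm {m n : Type*} [Fintype m] [Fintype n] (A : Matrix m n ℝ) : ℝ :=
  Real.sqrt (∑ i, ∑ j, (A i j) ^ 2)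

/-- Nuclear norm of a real square matrix: the sum of its singular values,
i.e. of the square roots of the eigenvalues of `Aᴴ * A`. -/
noncomputable def nuclearNorm {n : Type*} [Fintype n] [DecidableEq n] (Z : Matrix n n ℝ) : ℝ :=
  ∑ i, Real.sqrt ((Matrix.isHermitian_conjTranspose_mul_self Z : (Zᵀ * Z).IsHermitian).eigenvalues i)

/-!
Write `W = Uᵀ Z U`. Since `ΦᵀΦ = U diag(σ) Uᵀ`, the fit term is `½ Σᵢⱼ σᵢ (I - W)ᵢⱼ²`, which is at
least `½ Σᵢ σᵢ (1 - Wᵢᵢ)²`. The nuclear norm dominates `tr (G Z)` for every contraction `G`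
(evaluate the trace in an eigenbasis of `ZᵀZ` and use Cauchy–Schwarz); with
`G = U diag(sign Wᵢᵢ) Uᵀ` this gives `‖Z‖_* ≥ Σᵢ |Wᵢᵢ|`. So `F(Z)` is bounded below by a sum of
decoupled scalar problems `½ σᵢ (1 - w)² + λ |w|`, each minimised at the soft-thresholded value
`D_λ(i,i)`, and both bounds are equalities at `Z* = U D_λ Uᵀ`.
-/

section Fintype

variable {n : Type*} [Fintype n]

lemma frobNorm_sq_eq_trace {m : Type*} [Fintype m] (A : Matrix m n ℝ) :
    frobNorm A ^ 2 = trace (Aᵀ * A) := by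
  rw [frobNorm, Real.sq_sqrt (by positivity), Finset.sum_comm]
  simp [trace, mul_apply, sq]

lemma dotProduct_le_sqrt_mul_sqrt (x y : n → ℝ) : x ⬝ᵥ y ≤ √(x ⬝ᵥ x) * √(y ⬝ᵥ y) := by
  simpa only [dotProduct, sq] using Real.sum_mul_le_sqrt_mul_sqrt univ x y

lemma mulVec_dotProduct_mulVec_self (U : Matrix n n ℝ) (x : n → ℝ) :
    (U *ᵥ x) ⬝ᵥ (U *ᵥ x) = x ⬝ᵥ ((Uᵀ * U) *ᵥ x) := by
  rw [dotProduct_comm, dotProduct_mulVec, ← mulVec_transpose, mulVec_mulVec, dotProduct_comm]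

end Fintype

section DecidableEq

variable {n : Type*} [Fintype n] [DecidableEq n]

lemma diagonal_mulVec_dotProduct_self_le {s : n → ℝ} (hs : ∀ i, |s i| ≤ 1) (w : n → ℝ) :
    (diagonal s *ᵥ w) ⬝ᵥ (diagonal s *ᵥ w) ≤ w ⬝ᵥ w := by
  simp only [mulVec_diagonal, dotProduct]
  refine sum_le_sum fun i _ => ?_
  have : s i * s i ≤ 1 := by nlinarith [abs_le.mp (hs i), abs_nonneg (s i), abs_mul_abs_self (s i)]
  nlinarith [mul_self_nonneg (w i)]

lemma conj_diagonal_mulVec_dotProduct_self_le {U : Matrix n n ℝ} (hU : U * Uᵀ = 1)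
    (hU' : Uᵀ * U = 1) {s : n → ℝ} (hs : ∀ i, |s i| ≤ 1) (v : n → ℝ) :
    ((U * diagonal s * Uᵀ) *ᵥ v) ⬝ᵥ ((U * diagonal s * Uᵀ) *ᵥ v) ≤ v ⬝ᵥ v := by
  have hUt : Uᵀᵀ * Uᵀ = 1 := by rwa [transpose_transpose]
  calc _ = (diagonal s *ᵥ (Uᵀ *ᵥ v)) ⬝ᵥ (diagonal s *ᵥ (Uᵀ *ᵥ v)) := by
        rw [← mulVec_mulVec, ← mulVec_mulVec, mulVec_dotProduct_mulVec_self, hU', one_mulVec]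
    _ ≤ (Uᵀ *ᵥ v) ⬝ᵥ (Uᵀ *ᵥ v) := diagonal_mulVec_dotProduct_self_le hs _
    _ = v ⬝ᵥ v := by rw [mulVec_dotProduct_mulVec_self, hUt, one_mulVec]

lemma Matrix.IsHermitian.trace_eq_sum_eigenvectorBasis {A : Matrix n n ℝ} (hA : A.IsHermitian)
    (B : Matrix n n ℝ) :
    trace B = ∑ j, (hA.eigenvectorBasis j).ofLp ⬝ᵥ (B *ᵥ (hA.eigenvectorBasis j).ofLp) := by
  set P : Matrix n n ℝ := ↑hA.eigenvectorUnitary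
  have hP : P * Pᵀ = 1 := by
    simpa [P, star_eq_conjTranspose] using Unitary.coe_mul_star_self hA.eigenvectorUnitary
  calc trace B = trace (Pᵀ * B * P) := by rw [trace_mul_cycle, hP, one_mul]
    _ = _ := by simp [trace, mul_mul_apply, P]

lemma Matrix.IsHermitian.eigenvectorBasis_dotProduct_self {A : Matrix n n ℝ} (hA : A.IsHermitian)
    (j : n) : (hA.eigenvectorBasis j).ofLp ⬝ᵥ (hA.eigenvectorBasis j).ofLp = 1 := by
  have h := orthonormal_iff_ite.mp hA.eigenvectorBasis.orthonormal j j
  rwa [if_pos rfl, EuclideanSpace.inner_eq_star_dotProduct, star_trivial] at h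

theorem trace_mul_le_nuclearNorm {G : Matrix n n ℝ}
    (hG : ∀ v, (G *ᵥ v) ⬝ᵥ (G *ᵥ v) ≤ v ⬝ᵥ v) (Z : Matrix n n ℝ) :
    trace (G * Z) ≤ nuclearNorm Z := by
  set hA := isHermitian_conjTranspose_mul_self Z
  rw [hA.trace_eq_sum_eigenvectorBasis]
  refine sum_le_sum fun j _ => ?_
  set v := (hA.eigenvectorBasis j).ofLp
  have hv : v ⬝ᵥ v = 1 := hA.eigenvectorBasis_dotProduct_self j
  have hZv : (Z *ᵥ v) ⬝ᵥ (Z *ᵥ v) = hA.eigenvalues j := by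
    rw [mulVec_dotProduct_mulVec_self, ← conjTranspose_eq_transpose_of_trivial,
      hA.mulVec_eigenvectorBasis, dotProduct_smul, hv, smul_eq_mul, mul_one]
  calc v ⬝ᵥ ((G * Z) *ᵥ v) = v ⬝ᵥ (G *ᵥ (Z *ᵥ v)) := by rw [mulVec_mulVec]
    _ ≤ √(v ⬝ᵥ v) * √((G *ᵥ (Z *ᵥ v)) ⬝ᵥ (G *ᵥ (Z *ᵥ v))) := dotProduct_le_sqrt_mul_sqrt _ _
    _ ≤ √((Z *ᵥ v) ⬝ᵥ (Z *ᵥ v)) := by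
      rw [hv, Real.sqrt_one, one_mul]; exact Real.sqrt_le_sqrt (hG _)
    _ = √(hA.eigenvalues j) := by rw [hZv]

theorem sum_abs_diag_conj_le_nuclearNorm {U : Matrix n n ℝ} (hU : U * Uᵀ = 1) (hU' : Uᵀ * U = 1)
    (Z : Matrix n n ℝ) : ∑ i, |(Uᵀ * Z * U) i i| ≤ nuclearNorm Z := by
  set s : n → ℝ := fun i => SignType.sign ((Uᵀ * Z * U) i i)
  have hs : ∀ i, |s i| ≤ 1 := fun i => by
    rcases lt_trichotomy ((Uᵀ * Z * U) i i) 0 with h | h | h <;> simp [s, h]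
  have htrace : trace (U * diagonal s * Uᵀ * Z) = ∑ i, |(Uᵀ * Z * U) i i| := by
    rw [Matrix.mul_assoc, trace_mul_comm, ← Matrix.mul_assoc, trace_mul_comm]
    simp [trace, s, sign_mul_self]
  exact htrace ▸ trace_mul_le_nuclearNorm (conj_diagonal_mulVec_dotProduct_self_le hU hU' hs) Z

lemma Matrix.IsHermitian.sum_comp_eigenvalues_of_eq_conj_diagonal {A U : Matrix n n ℝ}
    (hA : A.IsHermitian) (hU' : Uᵀ * U = 1) {a : n → ℝ} (hAU : A = U * diagonal a * Uᵀ)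
    (f : ℝ → ℝ) : ∑ i, f (hA.eigenvalues i) = ∑ i, f (a i) := by
  have hdiag : (diagonal a).charpoly.roots = univ.val.map a := by
    rw [charpoly_diagonal, prod_eq_multiset_prod, ← Polynomial.roots_multiset_prod_X_sub_C
      (univ.val.map a), Multiset.map_map]
    rfl
  have hroots : univ.val.map hA.eigenvalues = univ.val.map a := by
    have hchar : A.charpoly = (diagonal a).charpoly := by
      rw [hAU, charpoly_mul_comm, ← Matrix.mul_assoc, hU', Matrix.one_mul]
    simpa [hA.roots_charpoly_eq_eigenvalues, hdiag] using congrArg Polynomial.roots hchar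
  simp only [sum_eq_multiset_sum, ← Function.comp_apply (f := f), ← Multiset.map_map, hroots]

theorem nuclearNorm_conj_diagonal {U : Matrix n n ℝ} (hU' : Uᵀ * U = 1) (d : n → ℝ) :
    nuclearNorm (U * diagonal d * Uᵀ) = ∑ i, |d i| := by
  have hgram : (U * diagonal d * Uᵀ)ᵀ * (U * diagonal d * Uᵀ) = U * diagonal (d * d) * Uᵀ := by
    simp only [transpose_mul, transpose_transpose, diagonal_transpose, Matrix.mul_assoc]
    rw [← Matrix.mul_assoc Uᵀ U, hU', Matrix.one_mul, ← Matrix.mul_assoc (diagonal d),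
      diagonal_mul_diagonal]
    rfl
  simp only [nuclearNorm, ← Real.sqrt_mul_self_eq_abs]
  exact Matrix.IsHermitian.sum_comp_eigenvalues_of_eq_conj_diagonal _ hU' hgram _

lemma trace_transpose_mul_diagonal_mul (σ : n → ℝ) (M : Matrix n n ℝ) :
    trace (Mᵀ * diagonal σ * M) = ∑ i, ∑ j, σ i * M i j ^ 2 := by
  rw [Finset.sum_comm]
  simp [trace, mul_apply, diagonal, sq, mul_comm, mul_left_comm]

lemma sum_mul_diag_sq_le_trace {σ : n → ℝ} (hσ : ∀ i, 0 ≤ σ i) (M : Matrix n n ℝ) :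
    ∑ i, σ i * M i i ^ 2 ≤ trace (Mᵀ * diagonal σ * M) := by
  rw [trace_transpose_mul_diagonal_mul]
  exact sum_le_sum fun i _ =>
    single_le_sum (f := fun j => σ i * M i j ^ 2) (fun j _ => by have := hσ i; positivity)
      (mem_univ i)

lemma frobNorm_mul_conj_sq {m : Type*} [Fintype m] {Φ : Matrix m n ℝ} {U : Matrix n n ℝ}
    {σ : n → ℝ} (hK : Φᵀ * Φ = U * diagonal σ * Uᵀ) (hU' : Uᵀ * U = 1) (M : Matrix n n ℝ) :
    frobNorm (Φ * (U * M * Uᵀ)) ^ 2 = trace (Mᵀ * diagonal σ * M) := by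
  have hgram : (Φ * (U * M * Uᵀ))ᵀ * (Φ * (U * M * Uᵀ)) = U * (Mᵀ * diagonal σ * M) * Uᵀ := by
    rw [transpose_mul, Matrix.mul_assoc, ← Matrix.mul_assoc Φᵀ, hK]
    simp only [transpose_mul, transpose_transpose, Matrix.mul_assoc, ← Matrix.mul_assoc Uᵀ U, hU',
      Matrix.one_mul]
  rw [frobNorm_sq_eq_trace, hgram, trace_mul_comm, ← Matrix.mul_assoc, hU', Matrix.one_mul]

lemma sub_mul_eq_mul_conj {m : Type*} (Φ : Matrix m n ℝ) {U : Matrix n n ℝ} (hU : U * Uᵀ = 1)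
    (Z : Matrix n n ℝ) : Φ - Φ * Z = Φ * (U * (1 - Uᵀ * Z * U) * Uᵀ) := by
  rw [Matrix.mul_sub, Matrix.sub_mul, Matrix.mul_one, hU, ← Matrix.mul_assoc, ← Matrix.mul_assoc,
    hU, Matrix.one_mul, Matrix.mul_assoc, hU, Matrix.mul_one, Matrix.mul_sub, Matrix.mul_one]

end DecidableEq

noncomputable def shrinkage (lam σ : ℝ) : ℝ := if lam < σ then 1 - lam / σ else 0

noncomputable def scalarObjective (lam σ w : ℝ) : ℝ := 1 / 2 * (σ * (1 - w) ^ 2) + lam * |w|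

lemma scalarObjective_shrinkage {lam σ : ℝ} (hlam : 0 ≤ lam) :
    scalarObjective lam σ (shrinkage lam σ)
      = if lam < σ then lam - lam ^ 2 / (2 * σ) else σ / 2 := by
  unfold scalarObjective shrinkage
  split_ifs with h
  · have hσ : 0 < σ := hlam.trans_lt h
    rw [abs_of_nonneg (by rw [sub_nonneg, div_le_one hσ]; exact h.le)]
    field_simp
    ring
  · rw [sub_zero, abs_zero]
    ring

lemma scalarObjective_shrinkage_le {lam σ : ℝ} (hlam : 0 ≤ lam) (hσ : 0 ≤ σ) (w : ℝ) :
    scalarObjective lam σ (shrinkage lam σ) ≤ scalarObjective lam σ w := by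
  rw [scalarObjective_shrinkage hlam, scalarObjective]
  have hw : lam * w ≤ lam * |w| := mul_le_mul_of_nonneg_left (le_abs_self w) hlam
  split_ifs with h
  · have hσ' : 0 < σ := hlam.trans_lt h
    -- completing the square: `σ (1 - w) - λ` vanishes at the minimiser
    have hsq : lam - lam ^ 2 / (2 * σ) + (σ * (1 - w) - lam) ^ 2 / (2 * σ)
        = 1 / 2 * (σ * (1 - w) ^ 2) + lam * w := by
      field_simp
      ring
    nlinarith [div_nonneg (sq_nonneg (σ * (1 - w) - lam)) (by positivity : (0 : ℝ) ≤ 2 * σ)]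
  · have : σ * |w| ≤ lam * |w| := mul_le_mul_of_nonneg_right (not_lt.mp h) (abs_nonneg w)
    nlinarith [mul_le_mul_of_nonneg_left (le_abs_self w) hσ, mul_nonneg hσ (sq_nonneg w)]

section KLRR

variable {m n : Type*} [Fintype m] [Fintype n] [DecidableEq n]

noncomputable def klrrObjective (Φ : Matrix m n ℝ) (lam : ℝ) (Z : Matrix n n ℝ) : ℝ :=
  (1 / 2) * frobNorm (Φ - Φ * Z) ^ 2 + lam * nuclearNorm Z

theorem sum_scalarObjective_le_klrrObjective {Φ : Matrix m n ℝ} {U : Matrix n n ℝ} {σ : n → ℝ}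
    (hK : Φᵀ * Φ = U * diagonal σ * Uᵀ) (hU : U * Uᵀ = 1) (hU' : Uᵀ * U = 1)
    (hσ : ∀ i, 0 ≤ σ i) {lam : ℝ} (hlam : 0 ≤ lam) (Z : Matrix n n ℝ) :
    ∑ i, scalarObjective lam (σ i) ((Uᵀ * Z * U) i i) ≤ klrrObjective Φ lam Z := by
  have hfrob : ∑ i, σ i * (1 - (Uᵀ * Z * U) i i) ^ 2 ≤ frobNorm (Φ - Φ * Z) ^ 2 := by
    rw [sub_mul_eq_mul_conj Φ hU, frobNorm_mul_conj_sq hK hU']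
    simpa [Matrix.sub_apply, one_apply_eq] using sum_mul_diag_sq_le_trace hσ (1 - Uᵀ * Z * U)
  have hnuc := sum_abs_diag_conj_le_nuclearNorm hU hU' Z
  calc ∑ i, scalarObjective lam (σ i) ((Uᵀ * Z * U) i i)
      = 1 / 2 * ∑ i, σ i * (1 - (Uᵀ * Z * U) i i) ^ 2 + lam * ∑ i, |(Uᵀ * Z * U) i i| := by
        rw [mul_sum, mul_sum, ← sum_add_distrib]; rfl
    _ ≤ klrrObjective Φ lam Z := by unfold klrrObjective; gcongr

theorem klrrObjective_conj_diagonal {Φ : Matrix m n ℝ} {U : Matrix n n ℝ} {σ : n → ℝ}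
    (hK : Φᵀ * Φ = U * diagonal σ * Uᵀ) (hU : U * Uᵀ = 1) (hU' : Uᵀ * U = 1) (lam : ℝ)
    (d : n → ℝ) :
    klrrObjective Φ lam (U * diagonal d * Uᵀ) = ∑ i, scalarObjective lam (σ i) (d i) := by
  have hconj : Uᵀ * (U * diagonal d * Uᵀ) * U = diagonal d := by
    rw [← Matrix.mul_assoc, ← Matrix.mul_assoc, hU', Matrix.one_mul, Matrix.mul_assoc, hU',
      Matrix.mul_one]
  have hsub : (1 : Matrix n n ℝ) - diagonal d = diagonal (fun i => 1 - d i) := by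
    rw [← diagonal_one, diagonal_sub]
  rw [klrrObjective, sub_mul_eq_mul_conj Φ hU, hconj, hsub, frobNorm_mul_conj_sq hK hU',
    nuclearNorm_conj_diagonal hU']
  simp [trace, scalarObjective, mul_sum, sum_add_distrib, sq, mul_comm, mul_left_comm]

end KLRR

/-- For `λ ≥ 0`, the minimum value of the KLRR objective, attained at
`Z* = U D_λ Uᵀ`, equals `Σ_{σᵢ ≤ λ} σᵢ/2 + Σ_{σᵢ > λ} (λ − λ²/(2σᵢ))`. -/
theorem klrr_minimum_value {d n : ℕ}
    (Φ : Matrix (Fin d) (Fin n) ℝ) (lam : ℝ) (hlam : 0 ≤ lam)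
    (U : Matrix (Fin n) (Fin n) ℝ) (σ : Fin n → ℝ)
    (hU : U * Uᵀ = 1) (hU' : Uᵀ * U = 1) (hσ : ∀ i, 0 ≤ σ i)
    (hK : Φᵀ * Φ = U * Matrix.diagonal σ * Uᵀ)
    (Zstar : Matrix (Fin n) (Fin n) ℝ)
    (hZstar : Zstar =
      U * Matrix.diagonal (fun i => if lam < σ i then 1 - lam / σ i else 0) * Uᵀ) :
    (∀ Z : Matrix (Fin n) (Fin n) ℝ,
      (1 / 2) * (frobNorm (Φ - Φ * Zstar)) ^ 2 + lam * nuclearNorm Zstar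
        ≤ (1 / 2) * (frobNorm (Φ - Φ * Z)) ^ 2 + lam * nuclearNorm Z) ∧
    (1 / 2) * (frobNorm (Φ - Φ * Zstar)) ^ 2 + lam * nuclearNorm Zstar
      = (∑ i ∈ Finset.univ.filter (fun i => σ i ≤ lam), σ i / 2)
        + ∑ i ∈ Finset.univ.filter (fun i => lam < σ i), (lam - lam ^ 2 / (2 * σ i)) := by
  have hmin : klrrObjective Φ lam Zstar = ∑ i, scalarObjective lam (σ i) (shrinkage lam (σ i)) :=
    hZstar ▸ klrrObjective_conj_diagonal hK hU hU' lam _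
  refine ⟨fun Z => ?_, ?_⟩
  · calc klrrObjective Φ lam Zstar
        ≤ ∑ i, scalarObjective lam (σ i) ((Uᵀ * Z * U) i i) :=
          hmin ▸ sum_le_sum fun i _ => scalarObjective_shrinkage_le hlam (hσ i) _
      _ ≤ klrrObjective Φ lam Z := sum_scalarObjective_le_klrrObjective hK hU hU' hσ hlam Z
  · change klrrObjective Φ lam Zstar = _
    simp only [hmin, scalarObjective_shrinkage hlam, sum_ite, not_lt, add_comm]
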